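/- arXiv:1802.01297 — 5 statements merged into one kernel-verified Lean document; each statement's English description precedes it below -/
import Mathlib

section
/- Let A be a unital associative ℂ-algebra with a conjugate-linear involution * satisfying (xy)* = y*x*. Let τ : A → ℂ be ℂ-linear with τ(xy) = τ(yx) for all x, y. Let δ₁, δ₂ : A → A be ℂ-linear derivations commuting with the involution (δ_ν(x*) = (δ_ν(x))* for ν = 1,2). Let p ∈ A be a projection (p² = p and p* = p), and set a := (δ₁(p) + i·δ₂(p))·p. Then τ(δ₁(p)·δ₁(p) + δ₂(p)·δ₂(p)) + 2i·τ(p·(δ₁(p)·δ₂(p) − δ₂(p)·δ₁(p))) = 2·τ(a*·a). -/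
/-!
Applying the Leibniz rule to `p = p * p` gives `δ p = δ p * p + p * δ p`, so by
traciality `τ (δ p * δ p) = 2 τ (δ p * p * δ p)`. Since `δ p` is self-adjoint,
`a* = p (δ₁ p - i δ₂ p)`, and cycling `τ (a* a)` to `τ (a a*)` expands it into the terms
`τ (δ_μ p * p * δ_ν p)`: the diagonal ones give half the action, and the mixed ones cycle
into the topological charge.
-/

open Complex

section Idempotent

variable {A : Type*} [Ring A] {p : A}

theorem IsIdempotentElem.apply_eq_of_leibniz (hp : IsIdempotentElem p) {δ : A → A}
    (hδ : ∀ x y, δ (x * y) = δ x * y + x * δ y) : δ p = δ p * p + p * δ p := by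
  conv_lhs => rw [← hp.eq, hδ]

theorem map_mul_self_eq_two_mul_map_mul_mul {F M : Type*} [NonAssocSemiring M] [FunLike F A M]
    [AddMonoidHomClass F A M] (τ : F) (htr : ∀ x y, τ (x * y) = τ (y * x)) {d : A}
    (hd : d = d * p + p * d) : τ (d * d) = 2 * τ (d * p * d) :=
  calc τ (d * d) = τ (d * (d * p)) + τ (d * (p * d)) := by
        rw [← map_add, ← mul_add, ← hd]
    _ = 2 * τ (d * p * d) := by rw [htr, mul_assoc, two_mul]

end Idempotent

theorem IsSelfAdjoint.star_add_I_smul {A : Type*} [AddCommGroup A] [StarAddMonoid A] [Module ℂ A]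
    [StarModule ℂ A] {x y : A} (hx : IsSelfAdjoint x) (hy : IsSelfAdjoint y) :
    star (x + I • y) = x - I • y := by
  rw [star_add, star_smul, hx.star_eq, hy.star_eq, star_def, conj_I, neg_smul, sub_eq_add_neg]

theorem add_I_smul_mul_mul_sub_I_smul {A : Type*} [Ring A] [Algebra ℂ A] (x y p : A) :
    (x + I • y) * p * (x - I • y) = x * p * x + y * p * y + I • (y * p * x - x * p * y) := by
  simp only [add_mul, mul_sub, smul_mul_assoc, mul_smul_comm]
  match_scalars <;> simp

/-- Bogomolny-type decomposition: for a projection `p` in a unital ℂ-algebra with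
involution, tracial functional `τ`, and star-commuting ℂ-linear derivations
`δ₁, δ₂`, setting `a = (δ₁(p) + i·δ₂(p))·p`, one has
`τ(δ₁(p)δ₁(p) + δ₂(p)δ₂(p)) + 2i·τ(p(δ₁(p)δ₂(p) − δ₂(p)δ₁(p))) = 2·τ(a*·a)`. -/
theorem bogomolny_decomposition
    {A : Type*} [Ring A] [Algebra ℂ A] [StarRing A] [StarModule ℂ A]
    (τ : A →ₗ[ℂ] ℂ) (htr : ∀ x y : A, τ (x * y) = τ (y * x))
    (δ₁ δ₂ : A →ₗ[ℂ] A)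
    (hleib₁ : ∀ x y : A, δ₁ (x * y) = δ₁ x * y + x * δ₁ y)
    (hleib₂ : ∀ x y : A, δ₂ (x * y) = δ₂ x * y + x * δ₂ y)
    (hstar₁ : ∀ x : A, δ₁ (star x) = star (δ₁ x))
    (hstar₂ : ∀ x : A, δ₂ (star x) = star (δ₂ x))
    (p : A) (hp : p * p = p) (hps : star p = p)
    (a : A) (ha : a = (δ₁ p + Complex.I • δ₂ p) * p) :
    τ (δ₁ p * δ₁ p + δ₂ p * δ₂ p)
      + 2 * Complex.I * τ (p * (δ₁ p * δ₂ p - δ₂ p * δ₁ p))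
      = 2 * τ (star a * a) := by
  have hsa₁ : IsSelfAdjoint (δ₁ p) := by rw [IsSelfAdjoint, ← hstar₁, hps]
  have hsa₂ : IsSelfAdjoint (δ₂ p) := by rw [IsSelfAdjoint, ← hstar₂, hps]
  have hstar_a : star a = p * (δ₁ p - I • δ₂ p) := by
    rw [ha, star_mul, hps, hsa₁.star_add_I_smul hsa₂]
  have hcyc : τ (star a * a) = τ ((δ₁ p + I • δ₂ p) * p * (δ₁ p - I • δ₂ p)) := by
    rw [htr, hstar_a, ha, mul_assoc _ p, ← mul_assoc p p, hp, mul_assoc]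
  have h₁₁ := map_mul_self_eq_two_mul_map_mul_mul τ htr
    (IsIdempotentElem.apply_eq_of_leibniz hp hleib₁)
  have h₂₂ := map_mul_self_eq_two_mul_map_mul_mul τ htr
    (IsIdempotentElem.apply_eq_of_leibniz hp hleib₂)
  have h₁₂ : τ (δ₁ p * p * δ₂ p) = τ (p * (δ₂ p * δ₁ p)) := by
    rw [mul_assoc, htr, mul_assoc]
  have h₂₁ : τ (δ₂ p * p * δ₁ p) = τ (p * (δ₁ p * δ₂ p)) := by
    rw [mul_assoc, htr, mul_assoc]
  rw [hcyc, add_I_smul_mul_mul_sub_I_smul, map_add, map_add, map_smul, map_sub, smul_eq_mul,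
    map_add, mul_sub, map_sub]
  linear_combination h₁₁ + h₂₂ + 2 * I * h₁₂ - 2 * I * h₂₁
end

section
/- Let A be a unital associative ℂ-algebra with a conjugate-linear involution * satisfying (xy)* = y*x*. Let τ : A → ℂ be ℂ-linear with τ(xy) = τ(yx) for all x, y, and positive in the sense that τ(x*x) is a nonnegative real number for every x ∈ A. Let δ₁, δ₂ : A → A be ℂ-linear derivations with δ_ν(x*) = (δ_ν(x))* for ν = 1,2, and let p ∈ A satisfy p² = p = p*. Then both complex numbers τ(δ₁(p)·δ₁(p) + δ₂(p)·δ₂(p)) + 2i·τ(p·(δ₁(p)·δ₂(p) − δ₂(p)·δ₁(p))) and τ(δ₁(p)·δ₁(p) + δ₂(p)·δ₂(p)) − 2i·τ(p·(δ₁(p)·δ₂(p) − δ₂(p)·δ₁(p))) are nonnegative real numbers. (This is the Belavin–Polyakov bound S(p) ≥ 4π|Q(p)| for the action S(p) = τ(δ₁(p)δ₁(p) + δ₂(p)δ₂(p)) and topological charge Q(p) = (1/2πi)·τ(p(δ₁(p)δ₂(p) − δ₂(p)δ₁(p))).) -/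
/-!
Put `a = δ₁ p`, `b = δ₂ p`, self-adjoint because `p` is and the derivations commute with `*`.
Since `τ` is tracial, `τ (star (x * q) * (x * q)) = τ (q * (star x * x))` for
every projection `q`, and `τ (a * b - b * a) = 0`. Expanding
`star (a ± i b) * (a ± i b) = a² + b² ± i (a b - b a)` then gives
`τ (a² + b²) + 2 i τ (p (a b - b a)) = τ (|(a + i b) p|²) + τ (|(a - i b) (1 - p)|²)`,
a sum of two values of `τ` on positive elements; replacing `b` by `-b` gives the other sign.
-/

open Complex
open scoped ComplexOrder

theorem Complex.nonneg_iff_exists_nonneg_real_eq {z : ℂ} :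
    0 ≤ z ↔ ∃ r : ℝ, 0 ≤ r ∧ z = r := by
  simp only [RCLike.nonneg_iff_exists_ofReal (K := ℂ), eq_comm (a := z)]
  rfl

theorem trace_star_mul_self_of_isStarProjection {A M : Type*} [Semigroup A] [StarMul A]
    (τ : A → M) (htr : ∀ x y : A, τ (x * y) = τ (y * x)) {q : A} (hq : IsStarProjection q)
    (x : A) : τ (star (x * q) * (x * q)) = τ (q * (star x * x)) := by
  rw [star_mul, hq.isSelfAdjoint.star_eq, mul_assoc, htr, mul_assoc, mul_assoc,
    hq.isIdempotentElem.eq, ← mul_assoc, htr]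

section TracialFunctional

variable {A : Type*} [Ring A] [Algebra ℂ A] [StarRing A] [StarModule ℂ A]

theorem IsSelfAdjoint.star_add_I_smul_mul_self {a b : A} (ha : IsSelfAdjoint a)
    (hb : IsSelfAdjoint b) :
    star (a + I • b) * (a + I • b) = a * a + b * b + I • (a * b - b * a) := by
  simp only [star_add, star_smul, ha.star_eq, hb.star_eq, Complex.star_def, Complex.conj_I,
    add_mul, mul_add, smul_mul_assoc, mul_smul_comm]
  linear_combination (norm := module) -(I_mul_I • (b * b))

variable (τ : A →ₗ[ℂ] ℂ) (htr : ∀ x y : A, τ (x * y) = τ (y * x))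
  {p a b : A} (hp : IsStarProjection p) (ha : IsSelfAdjoint a) (hb : IsSelfAdjoint b)
include htr hp ha hb

theorem trace_star_mul_self_add_trace_star_mul_self_eq :
    τ (star ((a + I • b) * p) * ((a + I • b) * p))
      + τ (star ((a + I • -b) * (1 - p)) * ((a + I • -b) * (1 - p)))
      = τ (a * a + b * b) + 2 * I * τ (p * (a * b - b * a)) := by
  rw [trace_star_mul_self_of_isStarProjection τ htr hp,
    trace_star_mul_self_of_isStarProjection τ htr hp.one_sub,
    ha.star_add_I_smul_mul_self hb, ha.star_add_I_smul_mul_self hb.neg]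
  simp only [sub_mul, one_mul, mul_add, mul_sub, mul_neg, neg_mul, mul_smul_comm, sub_neg_eq_add,
    map_add, map_sub, map_neg, map_smul, smul_eq_mul]
  linear_combination (-I) * htr a b

variable (hpos : ∀ x : A, 0 ≤ τ (star x * x))
include hpos

theorem trace_add_two_I_mul_trace_commutator_nonneg :
    0 ≤ τ (a * a + b * b) + 2 * I * τ (p * (a * b - b * a)) := by
  rw [← trace_star_mul_self_add_trace_star_mul_self_eq τ htr hp ha hb]
  exact add_nonneg (hpos _) (hpos _)

theorem trace_sub_two_I_mul_trace_commutator_nonneg :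
    0 ≤ τ (a * a + b * b) - 2 * I * τ (p * (a * b - b * a)) := by
  have h := trace_add_two_I_mul_trace_commutator_nonneg τ htr hp ha hb.neg hpos
  have hneg : p * (a * -b - -b * a) = -(p * (a * b - b * a)) := by noncomm_ring
  rwa [neg_mul_neg, hneg, map_neg, mul_neg, ← sub_eq_add_neg] at h

end TracialFunctional

theorem belavin_polyakov_bound_general
    {A : Type*} [Ring A] [Algebra ℂ A] [StarRing A] [StarModule ℂ A]
    (τ : A →ₗ[ℂ] ℂ) (htr : ∀ x y : A, τ (x * y) = τ (y * x))
    (hpos : ∀ x : A, ∃ r : ℝ, 0 ≤ r ∧ τ (star x * x) = (r : ℂ))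
    (δ₁ δ₂ : A →ₗ[ℂ] A)
    (hstar₁ : ∀ x : A, δ₁ (star x) = star (δ₁ x))
    (hstar₂ : ∀ x : A, δ₂ (star x) = star (δ₂ x))
    (p : A) (hp : p * p = p) (hps : star p = p) :
    (∃ r : ℝ, 0 ≤ r ∧
      τ (δ₁ p * δ₁ p + δ₂ p * δ₂ p)
        + 2 * Complex.I * τ (p * (δ₁ p * δ₂ p - δ₂ p * δ₁ p)) = (r : ℂ)) ∧
    (∃ r : ℝ, 0 ≤ r ∧
      τ (δ₁ p * δ₁ p + δ₂ p * δ₂ p)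
        - 2 * Complex.I * τ (p * (δ₁ p * δ₂ p - δ₂ p * δ₁ p)) = (r : ℂ)) := by
  have hproj : IsStarProjection p := ⟨hp, hps⟩
  have hτ (x : A) : 0 ≤ τ (star x * x) := Complex.nonneg_iff_exists_nonneg_real_eq.2 (hpos x)
  have hδ₁ : IsSelfAdjoint (δ₁ p) := by rw [IsSelfAdjoint, ← hstar₁, hps]
  have hδ₂ : IsSelfAdjoint (δ₂ p) := by rw [IsSelfAdjoint, ← hstar₂, hps]
  exact ⟨Complex.nonneg_iff_exists_nonneg_real_eq.1 <|
      trace_add_two_I_mul_trace_commutator_nonneg τ htr hproj hδ₁ hδ₂ hτ,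
    Complex.nonneg_iff_exists_nonneg_real_eq.1 <|
      trace_sub_two_I_mul_trace_commutator_nonneg τ htr hproj hδ₁ hδ₂ hτ⟩

/-- Belavin–Polyakov bound: for a projection `p` in a unital ℂ-algebra with
involution, a positive tracial ℂ-linear functional `τ`, and star-commuting
ℂ-linear derivations `δ₁, δ₂`, both
`τ(δ₁(p)δ₁(p) + δ₂(p)δ₂(p)) ± 2i·τ(p(δ₁(p)δ₂(p) − δ₂(p)δ₁(p)))`
are nonnegative real numbers. -/
theorem belavin_polyakov_bound
    {A : Type*} [Ring A] [Algebra ℂ A] [StarRing A] [StarModule ℂ A]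
    (τ : A →ₗ[ℂ] ℂ) (htr : ∀ x y : A, τ (x * y) = τ (y * x))
    (hpos : ∀ x : A, ∃ r : ℝ, 0 ≤ r ∧ τ (star x * x) = (r : ℂ))
    (δ₁ δ₂ : A →ₗ[ℂ] A)
    (hleib₁ : ∀ x y : A, δ₁ (x * y) = δ₁ x * y + x * δ₁ y)
    (hleib₂ : ∀ x y : A, δ₂ (x * y) = δ₂ x * y + x * δ₂ y)
    (hstar₁ : ∀ x : A, δ₁ (star x) = star (δ₁ x))
    (hstar₂ : ∀ x : A, δ₂ (star x) = star (δ₂ x))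
    (p : A) (hp : p * p = p) (hps : star p = p) :
    (∃ r : ℝ, 0 ≤ r ∧
      τ (δ₁ p * δ₁ p + δ₂ p * δ₂ p)
        + 2 * Complex.I * τ (p * (δ₁ p * δ₂ p - δ₂ p * δ₁ p)) = (r : ℂ)) ∧
    (∃ r : ℝ, 0 ≤ r ∧
      τ (δ₁ p * δ₁ p + δ₂ p * δ₂ p)
        - 2 * Complex.I * τ (p * (δ₁ p * δ₂ p - δ₂ p * δ₁ p)) = (r : ℂ)) :=
  belavin_polyakov_bound_general τ htr hpos δ₁ δ₂ hstar₁ hstar₂ p hp hps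
end

section
/- Let A be a unital associative ℂ-algebra with a conjugate-linear involution * satisfying (xy)* = y*x*. Let τ : A → ℂ be ℂ-linear with τ(xy) = τ(yx) for all x, y, positive (τ(x*x) is a nonnegative real for all x) and faithful (τ(x*x) = 0 implies x = 0). Let δ₁, δ₂ : A → A be ℂ-linear derivations with δ_ν(x*) = (δ_ν(x))* for ν = 1,2, and let p ∈ A satisfy p² = p = p*. Then τ(δ₁(p)·δ₁(p) + δ₂(p)·δ₂(p)) + 2i·τ(p·(δ₁(p)·δ₂(p) − δ₂(p)·δ₁(p))) = 0 if and only if (δ₁(p) + i·δ₂(p))·p = 0; that is, the action S(p) attains the lower bound 4πQ(p) exactly when p satisfies the self-duality equation ∂̄(p)p = 0 with ∂̄ = δ₁ + iδ₂. -/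
/-!
With `a = δ₁ p`, `b = δ₂ p` and `x = (a + i b) p`, the Leibniz rule applied to `p = p²`
gives `a = a p + p a` (likewise for `b`), which together with the trace property yields
`τ(a² + b²) + 2i τ(p(ab − ba)) = 2 τ(x* x)`. Faithfulness of `τ` then says that the left side
vanishes exactly when `x = 0`.
-/

theorem leibniz_eq_of_idempotent {A : Type*} [NonUnitalNonAssocSemiring A] (D : A → A)
    (hleib : ∀ x y : A, D (x * y) = D x * y + x * D y) {p : A} (hp : p * p = p) :
    D p = D p * p + p * D p := by
  simpa only [hp] using hleib p p

theorem trace_mul_mul_idempotent {A M : Type*} [Semigroup A] (τ : A → M)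
    (htr : ∀ x y : A, τ (x * y) = τ (y * x)) {p : A} (hp : p * p = p) (y : A) :
    τ (p * y * p) = τ (p * y) := by
  rw [htr (p * y) p, ← mul_assoc, hp]

theorem trace_mul_self_of_eq_mul_add_mul {A M F : Type*} [NonUnitalSemiring A] [AddCommMonoid M]
    [FunLike F A M] [AddMonoidHomClass F A M] (τ : F) (htr : ∀ x y : A, τ (x * y) = τ (y * x))
    {p y : A} (hy : y = y * p + p * y) : τ (y * y) = 2 • τ (p * (y * y)) := by
  calc τ (y * y) = τ (y * p * y) + τ (p * y * y) := by
        rw [← map_add, ← add_mul, ← hy]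
    _ = 2 • τ (p * (y * y)) := by
        rw [htr (y * p) y, ← mul_assoc, htr (y * y) p, mul_assoc, two_nsmul]

theorem star_mul_self_of_isSelfAdjoint {A : Type*} [Ring A] [Algebra ℂ A] [StarRing A]
    [StarModule ℂ A] {a b p : A} (ha : star a = a) (hb : star b = b) (hp : star p = p) :
    star ((a + Complex.I • b) * p) * ((a + Complex.I • b) * p)
      = p * (a * a + b * b + Complex.I • (a * b - b * a)) * p := by
  have hconj : star ((a + Complex.I • b) * p) = p * (a - Complex.I • b) := by
    rw [star_mul, star_add, star_smul, hp, ha, hb, Complex.star_def, Complex.conj_I, neg_smul,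
      sub_eq_add_neg]
  have hprod : (a - Complex.I • b) * (a + Complex.I • b)
      = a * a + b * b + Complex.I • (a * b - b * a) := by
    simp only [sub_mul, mul_add, smul_mul_assoc, mul_smul_comm, smul_smul,
      Complex.I_mul_I, neg_one_smul, smul_sub]
    abel
  rw [hconj, ← hprod]
  simp only [mul_assoc]

theorem trace_action_eq_two_mul_trace_star_mul_self {A : Type*} [Ring A] [Algebra ℂ A]
    [StarRing A] [StarModule ℂ A] (τ : A →ₗ[ℂ] ℂ) (htr : ∀ x y : A, τ (x * y) = τ (y * x))
    {a b p : A} (hp : p * p = p) (hps : star p = p) (ha : a = a * p + p * a)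
    (hb : b = b * p + p * b) (has : star a = a) (hbs : star b = b) :
    τ (a * a + b * b) + 2 * Complex.I * τ (p * (a * b - b * a))
      = 2 * τ (star ((a + Complex.I • b) * p) * ((a + Complex.I • b) * p)) := by
  rw [star_mul_self_of_isSelfAdjoint has hbs hps, trace_mul_mul_idempotent τ htr hp, map_add,
    trace_mul_self_of_eq_mul_add_mul τ htr ha, trace_mul_self_of_eq_mul_add_mul τ htr hb,
    mul_add, mul_add, map_add, map_add, mul_smul_comm, map_smul, smul_eq_mul]
  simp only [two_nsmul]
  ring

theorem action_eq_bound_iff_self_dual_general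
    {A : Type*} [Ring A] [Algebra ℂ A] [StarRing A] [StarModule ℂ A]
    (τ : A →ₗ[ℂ] ℂ) (htr : ∀ x y : A, τ (x * y) = τ (y * x))
    (hfaithful : ∀ x : A, τ (star x * x) = 0 → x = 0)
    (δ₁ δ₂ : A →ₗ[ℂ] A)
    (hleib₁ : ∀ x y : A, δ₁ (x * y) = δ₁ x * y + x * δ₁ y)
    (hleib₂ : ∀ x y : A, δ₂ (x * y) = δ₂ x * y + x * δ₂ y)
    (hstar₁ : ∀ x : A, δ₁ (star x) = star (δ₁ x))
    (hstar₂ : ∀ x : A, δ₂ (star x) = star (δ₂ x))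
    (p : A) (hp : p * p = p) (hps : star p = p) :
    τ (δ₁ p * δ₁ p + δ₂ p * δ₂ p)
      + 2 * Complex.I * τ (p * (δ₁ p * δ₂ p - δ₂ p * δ₁ p)) = 0
    ↔ (δ₁ p + Complex.I • δ₂ p) * p = 0 := by
  rw [trace_action_eq_two_mul_trace_star_mul_self τ htr hp hps
      (leibniz_eq_of_idempotent δ₁ hleib₁ hp) (leibniz_eq_of_idempotent δ₂ hleib₂ hp)
      (by rw [← hstar₁, hps]) (by rw [← hstar₂, hps]),
    mul_eq_zero, or_iff_right two_ne_zero]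
  exact ⟨hfaithful _, fun h ↦ by rw [h, mul_zero, map_zero]⟩

/-- The sigma-model action attains its topological lower bound exactly at
solutions of the self-duality equation: for a projection `p`, a faithful positive
tracial functional `τ`, and star-commuting ℂ-linear derivations `δ₁, δ₂`,
`τ(δ₁(p)δ₁(p) + δ₂(p)δ₂(p)) + 2i·τ(p(δ₁(p)δ₂(p) − δ₂(p)δ₁(p))) = 0` iff
`(δ₁(p) + i·δ₂(p))·p = 0`. -/
theorem action_eq_bound_iff_self_dual
    {A : Type*} [Ring A] [Algebra ℂ A] [StarRing A] [StarModule ℂ A]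
    (τ : A →ₗ[ℂ] ℂ) (htr : ∀ x y : A, τ (x * y) = τ (y * x))
    (hpos : ∀ x : A, ∃ r : ℝ, 0 ≤ r ∧ τ (star x * x) = (r : ℂ))
    (hfaithful : ∀ x : A, τ (star x * x) = 0 → x = 0)
    (δ₁ δ₂ : A →ₗ[ℂ] A)
    (hleib₁ : ∀ x y : A, δ₁ (x * y) = δ₁ x * y + x * δ₁ y)
    (hleib₂ : ∀ x y : A, δ₂ (x * y) = δ₂ x * y + x * δ₂ y)
    (hstar₁ : ∀ x : A, δ₁ (star x) = star (δ₁ x))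
    (hstar₂ : ∀ x : A, δ₂ (star x) = star (δ₂ x))
    (p : A) (hp : p * p = p) (hps : star p = p) :
    τ (δ₁ p * δ₁ p + δ₂ p * δ₂ p)
      + 2 * Complex.I * τ (p * (δ₁ p * δ₂ p - δ₂ p * δ₁ p)) = 0
    ↔ (δ₁ p + Complex.I • δ₂ p) * p = 0 :=
  action_eq_bound_iff_self_dual_general τ htr hfaithful δ₁ δ₂ hleib₁ hleib₂ hstar₁ hstar₂ p hp hps
end

section
/- Let A and B be unital C*-algebras and let Ξ be an (A,B)-bimodule as in the context, with the additional positivity assumptions that A⟨f,f⟩ ≥ 0 in A and ⟨f,f⟩_B ≥ 0 in B for all f ∈ Ξ. Suppose η ∈ Ξ is such that ⟨η,η⟩_B is invertible in B. Then there exist real constants c₁ > 0 and c₂ > 0 such that for every ξ ∈ Ξ, c₁·A⟨ξ,ξ⟩ ≤ A⟨ξ,η⟩·A⟨η,ξ⟩ ≤ c₂·A⟨ξ,ξ⟩ in the C*-order of A; i.e., {η} is a standard module frame for Ξ. -/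
/-- An (A,B)-bimodule with compatible A-valued and B-valued hermitian pairings,
as in the Morita-equivalence picture for noncommutative tori. -/
structure HermitianBimodule (A B Ξ : Type*) [Ring A] [Ring B]
    [Algebra ℂ A] [Algebra ℂ B] [StarRing A] [StarRing B]
    [AddCommGroup Ξ] [Module ℂ Ξ] where
  /-- the left action of `A` -/
  smulA : A → Ξ → Ξ
  /-- the right action of `B` -/
  smulB : Ξ → B → Ξ
  /-- the `A`-valued pairing `A⟨·,·⟩` -/
  ipA : Ξ → Ξ → A
  /-- the `B`-valued pairing `⟨·,·⟩_B` -/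
  ipB : Ξ → Ξ → B
  -- left A-module axioms, ℂ-bilinear
  smulA_add : ∀ (a : A) (f g : Ξ), smulA a (f + g) = smulA a f + smulA a g
  add_smulA : ∀ (a b : A) (f : Ξ), smulA (a + b) f = smulA a f + smulA b f
  mul_smulA : ∀ (a b : A) (f : Ξ), smulA (a * b) f = smulA a (smulA b f)
  one_smulA : ∀ f : Ξ, smulA 1 f = f
  smulA_complex : ∀ (c : ℂ) (a : A) (f : Ξ), smulA a (c • f) = c • smulA a f
  complex_smulA : ∀ (c : ℂ) (a : A) (f : Ξ), smulA (c • a) f = c • smulA a f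
  -- right B-module axioms, ℂ-bilinear
  smulB_add : ∀ (f g : Ξ) (b : B), smulB (f + g) b = smulB f b + smulB g b
  add_smulB : ∀ (f : Ξ) (b c : B), smulB f (b + c) = smulB f b + smulB f c
  mul_smulB : ∀ (f : Ξ) (b c : B), smulB f (b * c) = smulB (smulB f b) c
  smulB_one : ∀ f : Ξ, smulB f 1 = f
  smulB_complex : ∀ (c : ℂ) (f : Ξ) (b : B), smulB (c • f) b = c • smulB f b
  complex_smulB : ∀ (c : ℂ) (f : Ξ) (b : B), smulB f (c • b) = c • smulB f b
  -- bimodule compatibility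
  smulA_smulB : ∀ (a : A) (f : Ξ) (b : B), smulB (smulA a f) b = smulA a (smulB f b)
  -- the A-valued pairing: ℂ-linear in the first variable, conjugate-linear in the second
  ipA_add_left : ∀ f g h : Ξ, ipA (f + g) h = ipA f h + ipA g h
  ipA_add_right : ∀ f g h : Ξ, ipA f (g + h) = ipA f g + ipA f h
  ipA_smul_left : ∀ (c : ℂ) (f g : Ξ), ipA (c • f) g = c • ipA f g
  ipA_smul_right : ∀ (c : ℂ) (f g : Ξ), ipA f (c • g) = (starRingEnd ℂ c) • ipA f g
  ipA_smulA : ∀ (a : A) (f g : Ξ), ipA (smulA a f) g = a * ipA f g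
  ipA_smulB : ∀ (f : Ξ) (b : B) (g : Ξ), ipA (smulB f b) g = ipA f (smulB g (star b))
  ipA_star : ∀ f g : Ξ, star (ipA f g) = ipA g f
  -- the B-valued pairing: conjugate-linear in the first variable, ℂ-linear in the second
  ipB_add_left : ∀ f g h : Ξ, ipB (f + g) h = ipB f h + ipB g h
  ipB_add_right : ∀ f g h : Ξ, ipB f (g + h) = ipB f g + ipB f h
  ipB_smul_left : ∀ (c : ℂ) (f g : Ξ), ipB (c • f) g = (starRingEnd ℂ c) • ipB f g
  ipB_smul_right : ∀ (c : ℂ) (f g : Ξ), ipB f (c • g) = c • ipB f g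
  ipB_smulB_right : ∀ (f g : Ξ) (b : B), ipB f (smulB g b) = ipB f g * b
  ipB_smulB_left : ∀ (f : Ξ) (b : B) (g : Ξ), ipB (smulB f b) g = star b * ipB f g
  ipB_star : ∀ f g : Ξ, star (ipB f g) = ipB g f
  -- associativity of the two pairings
  assoc : ∀ f g h : Ξ, smulB f (ipB g h) = smulA (ipA f g) h

/-!
Associativity turns `A⟨ξ,η⟩·A⟨η,ξ⟩` into `A⟨ξ·⟨η,η⟩_B, ξ⟩`, and `d ↦ A⟨ξ·d, ξ⟩` is an additive map
`B → A` sending `s*s` to `A⟨ξ·s*, ξ·s*⟩ ≥ 0`, hence monotone. Since `⟨η,η⟩_B` is positive and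
invertible, its spectrum lies in some `[c₁, c₂] ⊆ (0, ∞)`, i.e. `c₁ ≤ ⟨η,η⟩_B ≤ c₂`; applying the
monotone map gives the two frame inequalities.
-/

lemma IsStrictlyPositive.exists_algebraMap_le_and_le_algebraMap {B : Type*} [CStarAlgebra B]
    [PartialOrder B] [StarOrderedRing B] {b : B} (hb : IsStrictlyPositive b) :
    ∃ c₁ c₂ : ℝ, 0 < c₁ ∧ 0 < c₂ ∧ algebraMap ℝ B c₁ ≤ b ∧ b ≤ algebraMap ℝ B c₂ := by
  rcases subsingleton_or_nontrivial B with _ | _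
  · exact ⟨1, 1, one_pos, one_pos, Subsingleton.le _ _, Subsingleton.le _ _⟩
  obtain ⟨c₁, hc₁, hc₁_le⟩ :=
    (CFC.exists_pos_algebraMap_le_iff hb.isSelfAdjoint).2 fun x hx ↦ hb.spectrum_pos hx
  exact ⟨c₁, ‖b‖, hc₁, norm_pos_iff.2 hb.isUnit.ne_zero, hc₁_le,
    hb.isSelfAdjoint.le_algebraMap_norm_self⟩

namespace HermitianBimodule

variable {A B Ξ : Type*} [Ring A] [Ring B] [Algebra ℂ A] [Algebra ℂ B] [StarRing A] [StarRing B]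
  [AddCommGroup Ξ] [Module ℂ Ξ] (M : HermitianBimodule A B Ξ)

def ipAOfSmulB (ξ : Ξ) : B →+ A :=
  AddMonoidHom.mk' (fun d ↦ M.ipA (M.smulB ξ d) ξ) fun d d' ↦ by
    rw [M.add_smulB, M.ipA_add_left]

@[simp]
lemma ipAOfSmulB_apply (ξ : Ξ) (d : B) : M.ipAOfSmulB ξ d = M.ipA (M.smulB ξ d) ξ := rfl

lemma ipAOfSmulB_ipB (ξ η ζ : Ξ) : M.ipAOfSmulB ξ (M.ipB η ζ) = M.ipA ξ η * M.ipA ζ ξ := by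
  rw [ipAOfSmulB_apply, M.assoc, M.ipA_smulA]

lemma ipAOfSmulB_algebraMap (ξ : Ξ) (c : ℂ) :
    M.ipAOfSmulB ξ (algebraMap ℂ B c) = c • M.ipA ξ ξ := by
  rw [ipAOfSmulB_apply, Algebra.algebraMap_eq_smul_one, M.complex_smulB, M.smulB_one,
    M.ipA_smul_left]

variable [PartialOrder A] [StarOrderedRing A] [PartialOrder B] [StarOrderedRing B]

lemma ipAOfSmulB_nonneg (hposA : ∀ f : Ξ, 0 ≤ M.ipA f f) (ξ : Ξ) {d : B} (hd : 0 ≤ d) :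
    0 ≤ M.ipAOfSmulB ξ d := by
  rw [StarOrderedRing.nonneg_iff] at hd
  induction hd using AddSubmonoid.closure_induction with
  | mem x hx =>
    obtain ⟨s, rfl⟩ := hx
    rw [ipAOfSmulB_apply, M.mul_smulB, M.ipA_smulB]
    exact hposA _
  | zero => rw [map_zero]
  | add x y _ _ hx hy => rw [map_add]; exact add_nonneg hx hy

lemma ipAOfSmulB_mono (hposA : ∀ f : Ξ, 0 ≤ M.ipA f f) (ξ : Ξ) :
    Monotone (M.ipAOfSmulB ξ) := fun d d' hdd' ↦ by
  simpa only [map_sub, sub_nonneg] using M.ipAOfSmulB_nonneg hposA ξ (sub_nonneg.2 hdd')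

end HermitianBimodule

theorem single_standard_module_frame_general
    {A B Ξ : Type*}
    [NormedRing A] [StarRing A] [NormedAlgebra ℂ A]
    [PartialOrder A] [StarOrderedRing A]
    [NormedRing B] [StarRing B] [CStarRing B] [NormedAlgebra ℂ B]
    [CompleteSpace B] [PartialOrder B] [StarOrderedRing B] [StarModule ℂ B]
    [AddCommGroup Ξ] [Module ℂ Ξ]
    (M : HermitianBimodule A B Ξ)
    (hposA : ∀ f : Ξ, 0 ≤ M.ipA f f)
    (hposB : ∀ f : Ξ, 0 ≤ M.ipB f f)
    (η : Ξ) (hη : IsUnit (M.ipB η η)) :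
    ∃ c₁ c₂ : ℝ, 0 < c₁ ∧ 0 < c₂ ∧ ∀ ξ : Ξ,
      (c₁ : ℂ) • M.ipA ξ ξ ≤ M.ipA ξ η * M.ipA η ξ ∧
      M.ipA ξ η * M.ipA η ξ ≤ (c₂ : ℂ) • M.ipA ξ ξ := by
  let : CStarAlgebra B := { }
  obtain ⟨c₁, c₂, hc₁, hc₂, hc₁_le, hle_c₂⟩ :=
    (hη.isStrictlyPositive (hposB η)).exists_algebraMap_le_and_le_algebraMap
  have halgebraMap (r : ℝ) : algebraMap ℝ B r = algebraMap ℂ B r :=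
    IsScalarTower.algebraMap_apply ℝ ℂ B r
  refine ⟨c₁, c₂, hc₁, hc₂, fun ξ ↦ ?_⟩
  rw [← M.ipAOfSmulB_ipB, ← M.ipAOfSmulB_algebraMap, ← M.ipAOfSmulB_algebraMap,
    ← halgebraMap, ← halgebraMap]
  exact ⟨M.ipAOfSmulB_mono hposA ξ hc₁_le, M.ipAOfSmulB_mono hposA ξ hle_c₂⟩

/-- If `⟨η,η⟩_B` is invertible in the C*-algebra `B`, then `{η}` is a standard
module frame: there are constants `0 < c₁, c₂` with
`c₁·A⟨ξ,ξ⟩ ≤ A⟨ξ,η⟩·A⟨η,ξ⟩ ≤ c₂·A⟨ξ,ξ⟩` for all `ξ`. -/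
theorem single_standard_module_frame
    {A B Ξ : Type*}
    [NormedRing A] [StarRing A] [CStarRing A] [NormedAlgebra ℂ A]
    [CompleteSpace A] [PartialOrder A] [StarOrderedRing A] [StarModule ℂ A]
    [NormedRing B] [StarRing B] [CStarRing B] [NormedAlgebra ℂ B]
    [CompleteSpace B] [PartialOrder B] [StarOrderedRing B] [StarModule ℂ B]
    [AddCommGroup Ξ] [Module ℂ Ξ]
    (M : HermitianBimodule A B Ξ)
    (hposA : ∀ f : Ξ, 0 ≤ M.ipA f f)
    (hposB : ∀ f : Ξ, 0 ≤ M.ipB f f)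
    (η : Ξ) (hη : IsUnit (M.ipB η η)) :
    ∃ c₁ c₂ : ℝ, 0 < c₁ ∧ 0 < c₂ ∧ ∀ ξ : Ξ,
      (c₁ : ℂ) • M.ipA ξ ξ ≤ M.ipA ξ η * M.ipA η ξ ∧
      M.ipA ξ η * M.ipA η ξ ≤ (c₂ : ℂ) • M.ipA ξ ξ :=
  single_standard_module_frame_general M hposA hposB η hη
end

section
/- Let A and B be unital ℂ-algebras with involutions, Ξ an (A,B)-bimodule as in the context, and for ν = 1,2 let δ_ν, d_ν, ∇_ν be derivations and connections as in the context. Suppose η ∈ Ξ is such that ⟨η,η⟩_B is invertible in B, and set p := A⟨η·⟨η,η⟩_B⁻¹, η⟩. Then for each ν = 1,2: δ_ν(p)·p = (1 − p)·A⟨∇_ν η, η·⟨η,η⟩_B⁻¹⟩. -/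
open scoped Ring

theorem IsIdempotentElem.leibniz_mul_self {R : Type*} [Ring R] {δ : R → R}
    (hδ : ∀ x y, δ (x * y) = δ x * y + x * δ y) {p : R} (hp : IsIdempotentElem p) :
    δ p * p = (1 - p) * δ p := by
  have h := hδ p p
  rw [hp.eq] at h
  rw [sub_mul, one_mul, eq_sub_iff_add_eq, ← h]

namespace HermitianBimodule

variable {A B Ξ : Type*} [Ring A] [Ring B] [Algebra ℂ A] [Algebra ℂ B] [StarRing A] [StarRing B]
  [AddCommGroup Ξ] [Module ℂ Ξ] (M : HermitianBimodule A B Ξ)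

theorem ipA_smulB_ringInverse_ipB_self (f g h : Ξ) :
    M.ipA (M.smulB f (M.ipB h h)⁻¹ʳ) g = M.ipA f (M.smulB g (M.ipB h h)⁻¹ʳ) := by
  rw [ipA_smulB, ← Ring.inverse_star, ipB_star]

noncomputable def rieffelProjection (η : Ξ) : A := M.ipA (M.smulB η (M.ipB η η)⁻¹ʳ) η

variable {M} {η : Ξ}

theorem smulA_rieffelProjection_self (hη : IsUnit (M.ipB η η)) :
    M.smulA (M.rieffelProjection η) η = η := by
  rw [rieffelProjection, ← assoc, ← mul_smulB, Ring.inverse_mul_cancel _ hη, smulB_one]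

theorem rieffelProjection_mul_ipA_smulB (hη : IsUnit (M.ipB η η)) (b : B) (g : Ξ) :
    M.rieffelProjection η * M.ipA (M.smulB η b) g = M.ipA (M.smulB η b) g := by
  rw [← ipA_smulA, ← smulA_smulB, smulA_rieffelProjection_self hη]

theorem one_sub_rieffelProjection_mul_ipA_smulB (hη : IsUnit (M.ipB η η)) (b : B) (g : Ξ) :
    (1 - M.rieffelProjection η) * M.ipA (M.smulB η b) g = 0 := by
  rw [sub_mul, one_mul, rieffelProjection_mul_ipA_smulB hη, sub_self]

theorem isIdempotentElem_rieffelProjection (hη : IsUnit (M.ipB η η)) :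
    IsIdempotentElem (M.rieffelProjection η) :=
  rieffelProjection_mul_ipA_smulB hη _ η

theorem apply_rieffelProjection {δ : A → A} {d : B → B} {conn : Ξ → Ξ}
    (hcompatA : ∀ f g, δ (M.ipA f g) = M.ipA (conn f) g + M.ipA f (conn g))
    (hconn_leibniz : ∀ f b, conn (M.smulB f b) = M.smulB (conn f) b + M.smulB f (d b)) :
    δ (M.rieffelProjection η) = M.ipA (M.smulB (conn η) (M.ipB η η)⁻¹ʳ) η
      + M.ipA (M.smulB η (d (M.ipB η η)⁻¹ʳ)) η + M.ipA (M.smulB η (M.ipB η η)⁻¹ʳ) (conn η) := by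
  rw [rieffelProjection, hcompatA, hconn_leibniz, ipA_add_left]

end HermitianBimodule

theorem deriv_projection_formula_general
    {A B Ξ : Type*} [Ring A] [Ring B]
    [Algebra ℂ A] [Algebra ℂ B] [StarRing A] [StarRing B]
    [AddCommGroup Ξ] [Module ℂ Ξ]
    (M : HermitianBimodule A B Ξ)
    (δ : Fin 2 → A → A) (d : Fin 2 → B → B) (conn : Fin 2 → Ξ → Ξ)
    (hδ_leibniz : ∀ ν (x y : A), δ ν (x * y) = δ ν x * y + x * δ ν y)
    (hconn_leibniz : ∀ ν (f : Ξ) (b : B),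
      conn ν (M.smulB f b) = M.smulB (conn ν f) b + M.smulB f (d ν b))
    (hcompatA : ∀ ν (f g : Ξ),
      δ ν (M.ipA f g) = M.ipA (conn ν f) g + M.ipA f (conn ν g))
    (η : Ξ) (hη : IsUnit (M.ipB η η))
    (p : A) (hpdef : p = M.ipA (M.smulB η (Ring.inverse (M.ipB η η))) η) :
    ∀ ν : Fin 2, δ ν p * p
      = (1 - p) * M.ipA (conn ν η) (M.smulB η (Ring.inverse (M.ipB η η))) := by
  intro ν
  change p = M.rieffelProjection η at hpdef
  subst hpdef
  have hkill := HermitianBimodule.one_sub_rieffelProjection_mul_ipA_smulB hη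
  rw [(HermitianBimodule.isIdempotentElem_rieffelProjection hη).leibniz_mul_self (hδ_leibniz ν),
    HermitianBimodule.apply_rieffelProjection (hcompatA ν) (hconn_leibniz ν), mul_add, mul_add,
    hkill, hkill, add_zero, add_zero, M.ipA_smulB_ringInverse_ipB_self]

/-- For derivations `δ_ν` on `A`, `d_ν` on `B` and compatible connections `∇_ν` on `Ξ`
(`ν = 1,2`), and `η` with `⟨η,η⟩_B` invertible, the Rieffel-type projection
`p = A⟨η·⟨η,η⟩_B⁻¹, η⟩` satisfies `δ_ν(p)·p = (1 − p)·A⟨∇_ν η, η·⟨η,η⟩_B⁻¹⟩`. -/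
theorem deriv_projection_formula
    {A B Ξ : Type*} [Ring A] [Ring B]
    [Algebra ℂ A] [Algebra ℂ B] [StarRing A] [StarRing B]
    [StarModule ℂ A] [StarModule ℂ B]
    [AddCommGroup Ξ] [Module ℂ Ξ]
    (M : HermitianBimodule A B Ξ)
    (δ : Fin 2 → A → A) (d : Fin 2 → B → B) (conn : Fin 2 → Ξ → Ξ)
    (hδ_add : ∀ ν (x y : A), δ ν (x + y) = δ ν x + δ ν y)
    (hδ_smul : ∀ ν (c : ℂ) (x : A), δ ν (c • x) = c • δ ν x)
    (hδ_leibniz : ∀ ν (x y : A), δ ν (x * y) = δ ν x * y + x * δ ν y)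
    (hd_add : ∀ ν (x y : B), d ν (x + y) = d ν x + d ν y)
    (hd_smul : ∀ ν (c : ℂ) (x : B), d ν (c • x) = c • d ν x)
    (hd_leibniz : ∀ ν (x y : B), d ν (x * y) = d ν x * y + x * d ν y)
    (hconn_add : ∀ ν (f g : Ξ), conn ν (f + g) = conn ν f + conn ν g)
    (hconn_smul : ∀ ν (c : ℂ) (f : Ξ), conn ν (c • f) = c • conn ν f)
    (hconn_leibniz : ∀ ν (f : Ξ) (b : B),
      conn ν (M.smulB f b) = M.smulB (conn ν f) b + M.smulB f (d ν b))
    (hcompatA : ∀ ν (f g : Ξ),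
      δ ν (M.ipA f g) = M.ipA (conn ν f) g + M.ipA f (conn ν g))
    (hcompatB : ∀ ν (f g : Ξ),
      d ν (M.ipB f g) = M.ipB (conn ν f) g + M.ipB f (conn ν g))
    (η : Ξ) (hη : IsUnit (M.ipB η η))
    (p : A) (hpdef : p = M.ipA (M.smulB η (Ring.inverse (M.ipB η η))) η) :
    ∀ ν : Fin 2, δ ν p * p
      = (1 - p) * M.ipA (conn ν η) (M.smulB η (Ring.inverse (M.ipB η η))) :=
  deriv_projection_formula_general M δ d conn hδ_leibniz hconn_leibniz hcompatA η hη p hpdef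
end
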